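/- If there exists a function F such that f^{λ/μ} = F(cp^{(1)}(λ), cp^{(2)}(λ), …, cp^{(i)}(λ), …) for all partitions λ containing μ, then for the conjugate μ†: f^{λ/μ†} = F(cp^{(1)}(λ), −cp^{(2)}(λ), …, (−1)^{i−1}cp^{(i)}(λ), …) for all λ containing μ†. -/

import Mathlib

open scoped Classical

/-- Number of standard skew tableaux of shape `l / m` (0 if `m ⊄ l`). -/
noncomputable def fSkew (l m : YoungDiagram) : ℕ :=
  if m ≤ l then
    Nat.card {T : ℕ × ℕ → ℕ //
      Set.BijOn T (↑(l.cells \ m.cells)) (Set.Icc 1 (l.cells \ m.cells).card) ∧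
      ∀ c ∈ l.cells \ m.cells, ∀ c' ∈ l.cells \ m.cells,
        c.1 ≤ c'.1 → c.2 ≤ c'.2 → c ≠ c' → T c < T c'}
  else 0

/-- Number of standard Young tableaux of shape `l`. -/
noncomputable def fSYT (l : YoungDiagram) : ℕ := fSkew l ⊥

/-- Content of a cell `(i, j)` (row `i`, column `j`) is `j - i`. -/
def ctnt (w : ℕ × ℕ) : ℤ := (w.2 : ℤ) - (w.1 : ℤ)

/-- The defining condition of a standard skew tableau, abstracted. -/
def Cond (l m : YoungDiagram) (T : ℕ × ℕ → ℕ) : Prop :=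
  Set.BijOn T (↑(l.cells \ m.cells)) (Set.Icc 1 (l.cells \ m.cells).card) ∧
    ∀ c ∈ l.cells \ m.cells, ∀ c' ∈ l.cells \ m.cells,
      c.1 ≤ c'.1 → c.2 ≤ c'.2 → c ≠ c' → T c < T c'

lemma fSkew_eq (l m : YoungDiagram) :
    fSkew l m = if m ≤ l then Nat.card {T : ℕ × ℕ → ℕ // Cond l m T} else 0 := rfl

lemma mem_diff_transpose (l m : YoungDiagram) (c : ℕ × ℕ) :
    c ∈ l.transpose.cells \ m.transpose.cells ↔ c.swap ∈ l.cells \ m.cells := by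
  simp [Finset.mem_sdiff]

lemma diff_transpose (l m : YoungDiagram) :
    l.transpose.cells \ m.transpose.cells =
      (Equiv.prodComm ℕ ℕ).finsetCongr (l.cells \ m.cells) := by
  ext c
  rw [mem_diff_transpose]
  simp [Finset.mem_map_equiv]

lemma card_diff_transpose (l m : YoungDiagram) :
    (l.transpose.cells \ m.transpose.cells).card = (l.cells \ m.cells).card := by
  rw [diff_transpose]; simp

lemma cond_mp (l m : YoungDiagram) (T : ℕ × ℕ → ℕ) (h : Cond l m T) :
    Cond l.transpose m.transpose (T ∘ Prod.swap) := by
  obtain ⟨hb, hm⟩ := h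
  constructor
  · rw [card_diff_transpose]
    refine hb.comp ?_
    refine ⟨fun c hc => ?_, (Prod.swap_injective).injOn, fun d hd => ?_⟩
    · exact_mod_cast (mem_diff_transpose l m c).mp (by exact_mod_cast hc)
    · refine ⟨d.swap, ?_, by simp⟩
      exact_mod_cast (mem_diff_transpose l m d.swap).mpr (by simpa using hd)
  · intro c hc c' hc' h1 h2 hne
    exact hm c.swap ((mem_diff_transpose l m c).mp hc) c'.swap
      ((mem_diff_transpose l m c').mp hc') h2 h1 (by simpa using hne)

lemma cond_iff (l m : YoungDiagram) (T : ℕ × ℕ → ℕ) :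
    Cond l.transpose m.transpose T ↔ Cond l m (T ∘ Prod.swap) := by
  constructor
  · intro h
    have := cond_mp l.transpose m.transpose T h
    simpa [YoungDiagram.transpose_transpose, Function.comp,
      Prod.swap_swap] using this
  · intro h
    have := cond_mp l m (T ∘ Prod.swap) h
    convert this using 1
    funext x; simp [Prod.swap_swap]

lemma fSkew_transpose (l m : YoungDiagram) :
    fSkew l.transpose m.transpose = fSkew l m := by
  rw [fSkew_eq, fSkew_eq, YoungDiagram.transpose_le_iff]
  by_cases h : m ≤ l
  · rw [if_pos h, if_pos h]
    refine Nat.card_congr (Equiv.subtypeEquiv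
      ((Equiv.prodComm ℕ ℕ).arrowCongr (Equiv.refl ℕ)) fun T => ?_)
    exact cond_iff l m T
  · rw [if_neg h, if_neg h]

lemma sum_ctnt_transpose (l : YoungDiagram) (i : ℕ) :
    ∑ w ∈ l.transpose.cells, (ctnt w) ^ i =
      (-1 : ℤ) ^ i * ∑ w ∈ l.cells, (ctnt w) ^ i := by
  have : l.transpose.cells = (Equiv.prodComm ℕ ℕ).finsetCongr l.cells := rfl
  rw [this, Equiv.finsetCongr_apply, Finset.sum_map, Finset.mul_sum]
  refine Finset.sum_congr rfl fun w _ => ?_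
  have : ctnt ((Equiv.prodComm ℕ ℕ).toEmbedding w) = - ctnt w := by
    simp [ctnt, Equiv.prodComm]
  rw [this, neg_pow]

theorem stmt_16 (mu : YoungDiagram) (F : (ℕ → ℤ) → ℤ)
    (hF : ∀ l : YoungDiagram, mu ≤ l →
      (fSkew l mu : ℤ) = F (fun i => ∑ w ∈ l.cells, (ctnt w) ^ i)) :
    ∀ l : YoungDiagram, mu.transpose ≤ l →
      (fSkew l mu.transpose : ℤ) =
        F (fun i => (-1 : ℤ) ^ i * ∑ w ∈ l.cells, (ctnt w) ^ i) := by
  intro l hl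
  have h1 : mu ≤ l.transpose := YoungDiagram.le_of_transpose_le hl
  have h2 := hF l.transpose h1
  have h3 : fSkew l mu.transpose = fSkew l.transpose mu := by
    conv_rhs => rw [← YoungDiagram.transpose_transpose mu]
    rw [fSkew_transpose]
  rw [h3, h2]
  congr 1
  funext i
  exact sum_ctnt_transpose l i
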